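/- Consider an interconnected system with true dynamics f_i and a surrogate system with dynamics f̃_i on the same index set 𝒩 and neighbor sets ℰ_i, where f_i and f̃_i are Lipschitz continuous with constants L_{f_i} and L_{f̃_i}, and each V_i : ℝ^{n_i} → [0,∞) is Lipschitz with constant L_{V_i}. For each i, let 𝒟_i be a rectangular grid with per-dimension step sizes Δ in the bounded operating region 𝒵_i (so every point of 𝒵_i is within Euclidean distance ½|Δ|₂ of 𝒟_i), let ε̂_i = max_{z∈𝒟_i} |f_i(z) − f̃_i(z)|₂ < ∞, and let ε_i = ε̂_i + ½(L_{f_i} + L_{f̃_i})|Δ|₂. Suppose there exist ε ∈ (0,1), ψ ≥ 0, class-𝒦_∞ functions α1, α2 with α1(|x|₂) ≤ V_i(x) ≤ α2(|x|₂) for all i and x, nonnegative gains γ_{i,j} with max_{i∈𝒩} Σ_{j∈ℰ_i∪{i}} γ_{i,j} ≤ 1−ε, and margins δ_i ≥ L_{V_i} ε_i > 0 such that for all admissible states and disturbances in 𝒵_i, V_i(f̃_i(x_{i,k}, {x_{j,k}}_{j∈ℰ_i}, d_{i,k})) ≤ Σ_{j∈ℰ_i∪{i}} γ_{i,j} V_j(x_{j,k})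 + ψ|d_{i,k}|₂ − δ_i. Then the true system satisfies V_i(f_i(x_{i,k}, {x_{j,k}}_{j∈ℰ_i}, d_{i,k})) ≤ Σ_{j∈ℰ_i∪{i}} γ_{i,j} V_j(x_{j,k}) + ψ|d_{i,k}|₂ on 𝒵_i, and hence the true interconnected system is scalably input-to-state stable. -/

import Mathlib

open scoped NNReal
open Filter

noncomputable section

/-- `ℝ^m` with the Euclidean norm. -/
abbrev Evec (m : ℕ) : Type := EuclideanSpace ℝ (Fin m)

/-- A class-𝒦 function: continuous, strictly increasing, vanishing at `0`. -/
def IsClassK (α : ℝ≥0 → ℝ≥0) : Prop :=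
  Continuous α ∧ StrictMono α ∧ α 0 = 0

/-- A class-𝒦∞ function: class 𝒦 and unbounded. -/
def IsClassKInfty (α : ℝ≥0 → ℝ≥0) : Prop :=
  IsClassK α ∧ Tendsto α atTop atTop

/-- A class-𝒦ℒ function. -/
def IsClassKL (β : ℝ≥0 → ℕ → ℝ≥0) : Prop :=
  (∀ k : ℕ, IsClassK fun s => β s k) ∧
    ∀ s : ℝ≥0, Tendsto (fun k => β s k) atTop (nhds 0)

/-- The input space of agent `i`: the tuple `z = (x_i, {x_j}_{j ∈ nbr i}, d_i)`,
carrying the Euclidean norm of the concatenated vector (realized by nesting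
`WithLp 2` and `PiLp 2`). -/
def Zin {ι : Type} (n p : ι → ℕ) (nbr : ι → Finset ι) (i : ι) : Type :=
  WithLp 2 (Evec (n i) ×
    WithLp 2 ((PiLp 2 fun j : {j // j ∈ nbr i} => Evec (n j.1)) × Evec (p i)))

noncomputable instance {ι : Type} (n p : ι → ℕ) (nbr : ι → Finset ι) (i : ι) :
    NormedAddCommGroup (Zin n p nbr i) := by
  unfold Zin; infer_instance

/-- Assembling the input tuple `z = (x_i, {x_j}_{j ∈ nbr i}, d_i)` of agent `i` from
a global state profile `x` and a disturbance `d`. -/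
def packZ {ι : Type} (n p : ι → ℕ) (nbr : ι → Finset ι) (i : ι)
    (x : ∀ j : ι, Evec (n j)) (d : Evec (p i)) : Zin n p nbr i :=
  (WithLp.equiv 2 _).symm
    (x i, (WithLp.equiv 2 _).symm
      ((WithLp.equiv 2 _).symm (fun j : {j // j ∈ nbr i} => x j.1), d))

/-! The grid covers the operating region up to distance `Δ/2`, so Lipschitz continuity of `f i`
and `ftil i` bounds their gap everywhere on `𝒵 i` by `εhat i + (Lf i + Lftil i) Δ/2`, and
Lipschitz continuity of `V i` turns this gap into a loss of at most `δ i`, which the margin of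
the surrogate's decremental condition absorbs.

For stability, the largest Lyapunov value `W k = maxᵢ Vᵢ(x_{i,k})` obeys
`W (k+1) ≤ (1 - ε) W k + ψ C`, hence `W k ≤ (1 - ε)^k α₂(maxⱼ |x_{j,0}|) + ψ C / ε`; inverting
`α₁` and splitting with `α₁⁻¹(a + b) ≤ α₁⁻¹(2a) + α₁⁻¹(2b)` yields the 𝒦ℒ and 𝒦 gains. -/

open Finset

theorem IsClassK.comp {α β : ℝ≥0 → ℝ≥0} (hα : IsClassK α) (hβ : IsClassK β) :
    IsClassK (α ∘ β) :=
  ⟨hα.1.comp hβ.1, hα.2.1.comp hβ.2.1, by simp [hα.2.2, hβ.2.2]⟩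

theorem isClassK_const_mul {c : ℝ≥0} (hc : 0 < c) : IsClassK (c * ·) :=
  ⟨continuous_const.mul continuous_id, fun _ _ h => mul_lt_mul_of_pos_left h hc, mul_zero c⟩

theorem IsClassKInfty.surjective {α : ℝ≥0 → ℝ≥0} (h : IsClassKInfty α) :
    Function.Surjective α := by
  obtain ⟨⟨hcont, -, h0⟩, htop⟩ := h
  intro y
  obtain ⟨b, hb⟩ := (tendsto_atTop.mp htop y).exists
  obtain ⟨x, -, hx⟩ := intermediate_value_Icc zero_le hcont.continuousOn
    (⟨h0.symm ▸ zero_le, hb⟩ : y ∈ Set.Icc (α 0) (α b))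
  exact ⟨x, hx⟩

def IsClassKInfty.orderIso {α : ℝ≥0 → ℝ≥0} (h : IsClassKInfty α) : ℝ≥0 ≃o ℝ≥0 :=
  StrictMono.orderIsoOfSurjective α h.1.2.1 h.surjective

theorem IsClassKInfty.isClassK_orderIso_symm {α : ℝ≥0 → ℝ≥0} (h : IsClassKInfty α) :
    IsClassK h.orderIso.symm :=
  ⟨h.orderIso.symm.continuous, h.orderIso.symm.strictMono,
    h.orderIso.symm_apply_eq.2 h.1.2.2.symm⟩

theorem IsClassK.isClassKL_geometric {g α : ℝ≥0 → ℝ≥0} (hg : IsClassK g) (hα : IsClassK α)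
    {r : ℝ≥0} (hr0 : 0 < r) (hr1 : r < 1) : IsClassKL fun s k => g (r ^ k * α s) := by
  refine ⟨fun k => hg.comp ((isClassK_const_mul (pow_pos hr0 k)).comp hα), fun s => ?_⟩
  have hdecay := (NNReal.tendsto_pow_atTop_nhds_zero_of_lt_one hr1).mul_const (α s)
  rw [zero_mul] at hdecay
  exact hg.2.2 ▸ (hg.1.tendsto 0).comp hdecay

theorem Monotone.map_add_le {g : ℝ≥0 → ℝ≥0} (hg : Monotone g) (a b : ℝ≥0) :
    g (a + b) ≤ g (2 * a) + g (2 * b) := by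
  rcases le_total a b with h | h
  · exact (hg (by rw [two_mul]; gcongr)).trans le_add_self
  · exact (hg (by rw [two_mul]; gcongr)).trans le_self_add

theorem le_pow_mul_add_div_of_le_mul_add {ε q : ℝ≥0} (hε0 : 0 < ε) (hε1 : ε ≤ 1)
    {w : ℕ → ℝ≥0} (hw : ∀ k, w (k + 1) ≤ (1 - ε) * w k + q) (k : ℕ) :
    w k ≤ (1 - ε) ^ k * w 0 + q / ε := by
  have hfixed_point : (1 - ε) * (q / ε) + q = q / ε := by
    rw [tsub_mul, one_mul, mul_div_cancel₀ q hε0.ne',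
      tsub_add_cancel_of_le (le_div_self bot_le hε0 hε1)]
  induction k with
  | zero => simp
  | succ k ih =>
    calc w (k + 1) ≤ (1 - ε) * ((1 - ε) ^ k * w 0 + q / ε) + q := (hw k).trans (by gcongr)
      _ = (1 - ε) ^ (k + 1) * w 0 + ((1 - ε) * (q / ε) + q) := by ring
      _ = (1 - ε) ^ (k + 1) * w 0 + q / ε := by rw [hfixed_point]

theorem Finset.sup_univ_le_mul_sup_univ_add {ι : Type*} [Fintype ι] (N : ι → Finset ι)
    (γ : ι → ι → ℝ≥0) {a q : ℝ≥0} (hγ : ∀ i, ∑ j ∈ N i, γ i j ≤ a) {v w : ι → ℝ≥0}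
    (hvw : ∀ i, w i ≤ ∑ j ∈ N i, γ i j * v j + q) :
    univ.sup w ≤ a * univ.sup v + q := by
  refine Finset.sup_le fun i _ => (hvw i).trans ?_
  calc ∑ j ∈ N i, γ i j * v j + q ≤ ∑ j ∈ N i, γ i j * univ.sup v + q := by
        gcongr with j; exact le_sup (mem_univ j)
    _ ≤ a * univ.sup v + q := by rw [← sum_mul]; gcongr; exact hγ i

section Robustness

variable {X Y : Type*} [PseudoMetricSpace X] [PseudoMetricSpace Y]

theorem LipschitzWith.nndist_le_of_nndist_le {f g : X → Y} {Kf Kg : ℝ≥0}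
    (hf : LipschitzWith Kf f) (hg : LipschitzWith Kg g) {z z' : X} {r e : ℝ≥0}
    (hz : nndist z z' ≤ r) (he : nndist (f z') (g z') ≤ e) :
    nndist (f z) (g z) ≤ e + (Kf + Kg) * r :=
  calc nndist (f z) (g z) ≤ nndist (f z) (f z') + nndist (f z') (g z') + nndist (g z') (g z) :=
        (nndist_triangle _ (g z') _).trans (by gcongr; exact nndist_triangle _ _ _)
    _ ≤ Kf * r + e + Kg * r := by
        gcongr
        · exact (hf.nndist_le z z').trans (by gcongr)
        · exact (hg.nndist_le z' z).trans (by rw [nndist_comm]; gcongr)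
    _ = e + (Kf + Kg) * r := by ring

theorem LipschitzWith.le_add_mul_nndist {V : Y → ℝ≥0} {K : ℝ≥0} (hV : LipschitzWith K V)
    (a b : Y) : V a ≤ V b + K * nndist a b :=
  (NNReal.le_add_nndist _ _).trans (by gcongr; exact hV.nndist_le a b)

end Robustness

section Network

variable {ι : Type} [Fintype ι] [DecidableEq ι] (n p : ι → ℕ) (nbr : ι → Finset ι)

def IsScalablyISS (f : ∀ i : ι, Zin n p nbr i → Evec (n i))
    (𝒵 : ∀ i : ι, Set (Zin n p nbr i)) : Prop :=
  ∃ β : ℝ≥0 → ℕ → ℝ≥0, ∃ μ : ℝ≥0 → ℝ≥0, IsClassKL β ∧ IsClassK μ ∧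
    ∀ (x : ℕ → ∀ j : ι, Evec (n j)) (d : ℕ → ∀ i : ι, Evec (p i)),
      (∀ (k : ℕ) (i : ι), packZ n p nbr i (x k) (d k i) ∈ 𝒵 i) →
      (∀ (k : ℕ) (i : ι), x (k + 1) i = f i (packZ n p nbr i (x k) (d k i))) →
      ∀ C : ℝ≥0, (∀ (k : ℕ) (i : ι), ‖d k i‖₊ ≤ C) →
      ∀ (k : ℕ) (i : ι),
        ‖x k i‖₊ ≤ β (Finset.univ.sup fun j => ‖x 0 j‖₊) k + μ C

theorem isScalablyISS_of_decremental {f : ∀ i : ι, Zin n p nbr i → Evec (n i)}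
    {𝒵 : ∀ i : ι, Set (Zin n p nbr i)} {V : ∀ i : ι, Evec (n i) → ℝ≥0}
    {ε ψ : ℝ≥0} (hε0 : 0 < ε) (hε1 : ε < 1) {α₁ α₂ : ℝ≥0 → ℝ≥0}
    (hα₁ : IsClassKInfty α₁) (hα₂ : IsClassKInfty α₂)
    (hsandwich : ∀ (i : ι) (x : Evec (n i)), α₁ ‖x‖₊ ≤ V i x ∧ V i x ≤ α₂ ‖x‖₊)
    {γ : ι → ι → ℝ≥0} (hsg : ∀ i : ι, ∑ j ∈ insert i (nbr i), γ i j ≤ 1 - ε)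
    (hdec : ∀ (i : ι) (x : ∀ j : ι, Evec (n j)) (d : Evec (p i)),
      packZ n p nbr i x d ∈ 𝒵 i →
      V i (f i (packZ n p nbr i x d)) ≤
        ∑ j ∈ insert i (nbr i), γ i j * V j (x j) + ψ * ‖d‖₊) :
    IsScalablyISS n p nbr f 𝒵 := by
  set g : ℝ≥0 → ℝ≥0 := fun y => hα₁.orderIso.symm (2 * y)
  have hg : IsClassK g := hα₁.isClassK_orderIso_symm.comp (isClassK_const_mul two_pos)
  -- `ψ + 1` rather than `ψ` keeps `μ` strictly increasing when `ψ = 0`.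
  refine ⟨fun s k => g ((1 - ε) ^ k * α₂ s), fun C => g ((ψ + 1) / ε * C),
    hg.isClassKL_geometric hα₂.1 (tsub_pos_of_lt hε1) (tsub_lt_self zero_lt_one hε0),
    hg.comp (isClassK_const_mul (by positivity)), ?_⟩
  intro x d hZ hdyn C hC k i
  set W : ℕ → ℝ≥0 := fun k => univ.sup fun j => V j (x k j)
  have hW : W k ≤ (1 - ε) ^ k * W 0 + ψ * C / ε := by
    refine le_pow_mul_add_div_of_le_mul_add hε0 hε1.le (fun k => ?_) k
    refine sup_univ_le_mul_sup_univ_add (fun i => insert i (nbr i)) γ hsg fun i => ?_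
    rw [hdyn k i]
    exact (hdec i (x k) (d k i) (hZ k i)).trans (by gcongr; exact hC k i)
  have hW0 : W 0 ≤ α₂ (univ.sup fun j => ‖x 0 j‖₊) :=
    Finset.sup_le fun j _ =>
      (hsandwich j _).2.trans (hα₂.1.2.1.monotone (le_sup (f := fun j => ‖x 0 j‖₊) (mem_univ j)))
  calc ‖x k i‖₊ ≤ hα₁.orderIso.symm ((1 - ε) ^ k * W 0 + ψ * C / ε) :=
        hα₁.orderIso.le_symm_apply.2 ((hsandwich i _).1.trans
          ((le_sup (f := fun j => V j (x k j)) (mem_univ i)).trans hW))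
    _ ≤ g ((1 - ε) ^ k * W 0) + g (ψ * C / ε) := hα₁.orderIso.symm.monotone.map_add_le _ _
    _ ≤ g ((1 - ε) ^ k * α₂ (univ.sup fun j => ‖x 0 j‖₊)) + g ((ψ + 1) / ε * C) := by
        gcongr <;> refine hg.2.1.monotone ?_
        · gcongr
        · rw [div_mul_eq_mul_div, add_mul, one_mul]; gcongr; exact le_self_add

end Network

theorem robust_sISS_verification_general
    {ι : Type} [Fintype ι] [DecidableEq ι]
    (n p : ι → ℕ) (nbr : ι → Finset ι)
    (f ftil : ∀ i : ι, Zin n p nbr i → Evec (n i))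
    (Lf Lftil LV : ι → ℝ≥0)
    (hLf : ∀ i : ι, LipschitzWith (Lf i) (f i))
    (hLftil : ∀ i : ι, LipschitzWith (Lftil i) (ftil i))
    (V : ∀ i : ι, Evec (n i) → ℝ≥0)
    (hLV : ∀ i : ι, LipschitzWith (LV i) (V i))
    (𝒵 𝒟 : ∀ i : ι, Set (Zin n p nbr i))
    (Δ : ℝ≥0)
    (hcover : ∀ i : ι, ∀ z ∈ 𝒵 i, ∃ z' ∈ 𝒟 i, dist z z' ≤ (Δ : ℝ) / 2)
    (εhat : ι → ℝ≥0)
    (hgrid : ∀ i : ι, ∀ z ∈ 𝒟 i, dist (f i z) (ftil i z) ≤ (εhat i : ℝ))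
    (δ : ι → ℝ≥0)
    (hδ : ∀ i : ι, LV i * (εhat i + (Lf i + Lftil i) * Δ / 2) ≤ δ i)
    (ε : ℝ≥0) (hε0 : 0 < ε) (hε1 : ε < 1) (ψ : ℝ≥0)
    (α₁ α₂ : ℝ≥0 → ℝ≥0) (hα₁ : IsClassKInfty α₁) (hα₂ : IsClassKInfty α₂)
    (γ : ι → ι → ℝ≥0)
    (hsg : ∀ i : ι, ∑ j ∈ insert i (nbr i), γ i j ≤ 1 - ε)
    (hsandwich : ∀ (i : ι) (x : Evec (n i)), α₁ ‖x‖₊ ≤ V i x ∧ V i x ≤ α₂ ‖x‖₊)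
    -- strengthened decremental condition for the surrogate dynamics on `𝒵 i`
    (hdectil : ∀ (i : ι) (x : ∀ j : ι, Evec (n j)) (d : Evec (p i)),
      packZ n p nbr i x d ∈ 𝒵 i →
      V i (ftil i (packZ n p nbr i x d)) + δ i ≤
        ∑ j ∈ insert i (nbr i), γ i j * V j (x j) + ψ * ‖d‖₊) :
    -- the decremental condition holds for the true dynamics on `𝒵 i` …
    (∀ (i : ι) (x : ∀ j : ι, Evec (n j)) (d : Evec (p i)),
      packZ n p nbr i x d ∈ 𝒵 i →
      V i (f i (packZ n p nbr i x d)) ≤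
        ∑ j ∈ insert i (nbr i), γ i j * V j (x j) + ψ * ‖d‖₊) ∧
    -- … and hence the true system is scalably input-to-state stable
    (∃ β : ℝ≥0 → ℕ → ℝ≥0, ∃ μ : ℝ≥0 → ℝ≥0, IsClassKL β ∧ IsClassK μ ∧
      ∀ (x : ℕ → ∀ j : ι, Evec (n j)) (d : ℕ → ∀ i : ι, Evec (p i)),
        (∀ (k : ℕ) (i : ι), packZ n p nbr i (x k) (d k i) ∈ 𝒵 i) →
        (∀ (k : ℕ) (i : ι), x (k + 1) i = f i (packZ n p nbr i (x k) (d k i))) →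
        ∀ C : ℝ≥0, (∀ (k : ℕ) (i : ι), ‖d k i‖₊ ≤ C) →
        ∀ (k : ℕ) (i : ι),
          ‖x k i‖₊ ≤ β (Finset.univ.sup fun j => ‖x 0 j‖₊) k + μ C) := by
  have hdec : ∀ (i : ι) (x : ∀ j : ι, Evec (n j)) (d : Evec (p i)),
      packZ n p nbr i x d ∈ 𝒵 i →
      V i (f i (packZ n p nbr i x d)) ≤
        ∑ j ∈ insert i (nbr i), γ i j * V j (x j) + ψ * ‖d‖₊ := by
    intro i x d hz
    obtain ⟨z', hz'𝒟, hz'⟩ := hcover i _ hz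
    have hnear : nndist (f i (packZ n p nbr i x d)) (ftil i (packZ n p nbr i x d)) ≤
        εhat i + (Lf i + Lftil i) * (Δ / 2) :=
      (hLf i).nndist_le_of_nndist_le (hLftil i)
        (by rw [← NNReal.coe_le_coe]; simpa using hz') (by exact_mod_cast hgrid i z' hz'𝒟)
    calc V i (f i (packZ n p nbr i x d))
        ≤ V i (ftil i (packZ n p nbr i x d)) + δ i :=
          ((hLV i).le_add_mul_nndist _ _).trans <| by
            grw [hnear, ← mul_div_assoc, hδ i]
      _ ≤ _ := hdectil i x d hz
  exact ⟨hdec, isScalablyISS_of_decremental n p nbr hε0 hε1 hα₁ hα₂ hsandwich hsg hdec⟩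

/-- **Robust sISS verification.** Suppose the true dynamics `f i` and the surrogate
dynamics `ftil i` of each agent are Lipschitz with constants `Lf i` and `Lftil i`,
and the Lyapunov functions `V i` are Lipschitz with constants `LV i`. Let `𝒟 i` be a
grid in the bounded operating region `𝒵 i` with covering radius `Δ/2` (for a
rectangular grid with per-dimension steps `Δvec`, `Δ = |Δvec|₂`), let `εhat i` bound
the surrogate error on the grid, and set `ε_i = εhat i + (Lf i + Lftil i) Δ / 2`.
If `V` satisfies class-𝒦∞ sandwich bounds and, with margins `δ i ≥ LV i * ε_i > 0`,
the strengthened decremental condition holds for the surrogate on `𝒵 i`, then the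
decremental condition holds for the true dynamics on `𝒵 i`, and hence the true
interconnected system is scalably input-to-state stable. -/
theorem robust_sISS_verification
    {ι : Type} [Fintype ι] [Nonempty ι] [DecidableEq ι]
    (n p : ι → ℕ) (nbr : ι → Finset ι)
    (f ftil : ∀ i : ι, Zin n p nbr i → Evec (n i))
    (Lf Lftil LV : ι → ℝ≥0)
    (hLf : ∀ i : ι, LipschitzWith (Lf i) (f i))
    (hLftil : ∀ i : ι, LipschitzWith (Lftil i) (ftil i))
    (V : ∀ i : ι, Evec (n i) → ℝ≥0)
    (hLV : ∀ i : ι, LipschitzWith (LV i) (V i))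
    (𝒵 𝒟 : ∀ i : ι, Set (Zin n p nbr i))
    (hDZ : ∀ i : ι, 𝒟 i ⊆ 𝒵 i)
    (Δ : ℝ≥0)
    (hcover : ∀ i : ι, ∀ z ∈ 𝒵 i, ∃ z' ∈ 𝒟 i, dist z z' ≤ (Δ : ℝ) / 2)
    (εhat : ι → ℝ≥0)
    (hgrid : ∀ i : ι, ∀ z ∈ 𝒟 i, dist (f i z) (ftil i z) ≤ (εhat i : ℝ))
    (δ : ι → ℝ≥0)
    (hδpos : ∀ i : ι, 0 < LV i * (εhat i + (Lf i + Lftil i) * Δ / 2))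
    (hδ : ∀ i : ι, LV i * (εhat i + (Lf i + Lftil i) * Δ / 2) ≤ δ i)
    (ε : ℝ≥0) (hε0 : 0 < ε) (hε1 : ε < 1) (ψ : ℝ≥0)
    (α₁ α₂ : ℝ≥0 → ℝ≥0) (hα₁ : IsClassKInfty α₁) (hα₂ : IsClassKInfty α₂)
    (γ : ι → ι → ℝ≥0)
    (hsg : ∀ i : ι, ∑ j ∈ insert i (nbr i), γ i j ≤ 1 - ε)
    (hsandwich : ∀ (i : ι) (x : Evec (n i)), α₁ ‖x‖₊ ≤ V i x ∧ V i x ≤ α₂ ‖x‖₊)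
    -- strengthened decremental condition for the surrogate dynamics on `𝒵 i`
    (hdectil : ∀ (i : ι) (x : ∀ j : ι, Evec (n j)) (d : Evec (p i)),
      packZ n p nbr i x d ∈ 𝒵 i →
      V i (ftil i (packZ n p nbr i x d)) + δ i ≤
        ∑ j ∈ insert i (nbr i), γ i j * V j (x j) + ψ * ‖d‖₊) :
    -- the decremental condition holds for the true dynamics on `𝒵 i` …
    (∀ (i : ι) (x : ∀ j : ι, Evec (n j)) (d : Evec (p i)),
      packZ n p nbr i x d ∈ 𝒵 i →
      V i (f i (packZ n p nbr i x d)) ≤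
        ∑ j ∈ insert i (nbr i), γ i j * V j (x j) + ψ * ‖d‖₊) ∧
    -- … and hence the true system is scalably input-to-state stable
    (∃ β : ℝ≥0 → ℕ → ℝ≥0, ∃ μ : ℝ≥0 → ℝ≥0, IsClassKL β ∧ IsClassK μ ∧
      ∀ (x : ℕ → ∀ j : ι, Evec (n j)) (d : ℕ → ∀ i : ι, Evec (p i)),
        (∀ (k : ℕ) (i : ι), packZ n p nbr i (x k) (d k i) ∈ 𝒵 i) →
        (∀ (k : ℕ) (i : ι), x (k + 1) i = f i (packZ n p nbr i (x k) (d k i))) →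
        ∀ C : ℝ≥0, (∀ (k : ℕ) (i : ι), ‖d k i‖₊ ≤ C) →
        ∀ (k : ℕ) (i : ι),
          ‖x k i‖₊ ≤ β (Finset.univ.sup fun j => ‖x 0 j‖₊) k + μ C) :=
  robust_sISS_verification_general n p nbr f ftil Lf Lftil LV hLf hLftil V hLV 𝒵 𝒟 Δ hcover εhat
    hgrid δ hδ ε hε0 hε1 ψ α₁ α₂ hα₁ hα₂ γ hsg hsandwich hdectil
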